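/- arXiv:2001.07889 — 2 statements merged into one kernel-verified Lean document; each statement's English description precedes it below -/
import Mathlib

section
/- Let 𝒞 be a nonempty bounded set of cost matrices, 𝒱 a nonempty bounded subset of ℝ^S, and D ≥ 0 a constant such that ‖(C − C')ᵀ‖∞ ≤ D for all C, C' ∈ 𝒞 (where ‖Mᵀ‖∞ = max_{a} ∑_{s} |M s a|). Then the diameter (with respect to the sup norm) of the set ⋃_{C ∈ 𝒞, V ∈ 𝒱} {f_C V} is at most S · D + γ · diam(𝒱), where diam denotes the metric diameter with respect to the sup norm. -/
/-!
Both the minimum over actions and the expectation under a stochastic kernel are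
1-Lipschitz for the sup norm, so `f_C V` and `f_{C'} V'` differ in every state by at
most `max |C s a - C' s a| + γ ‖V - V'‖∞`. An entry of `C - C'` is bounded by its
column sum, hence by `D ≤ S · D`, and `‖V - V'‖∞ ≤ diam 𝒱`.
-/

open Metric

/-- The Bellman operator for a discounted MDP with transition kernel `P`,
discount factor `γ` and cost matrix `C`. -/
noncomputable def bellman (S A : ℕ) (P : Fin S → Fin S → Fin A → ℝ) (γ : ℝ)
    (C : Fin S → Fin A → ℝ) (V : Fin S → ℝ) : Fin S → ℝ :=
  fun s => ⨅ a : Fin A, (C s a + γ * ∑ s' : Fin S, P s' s a * V s')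

section

variable {ι : Type*}

lemma ciInf_le_ciInf_add [Finite ι] [Nonempty ι] {f g : ι → ℝ} {M : ℝ}
    (h : ∀ i, f i ≤ g i + M) : ⨅ i, f i ≤ (⨅ i, g i) + M := by
  rw [← sub_le_iff_le_add]
  exact le_ciInf fun i => sub_le_iff_le_add.2 <| (Finite.ciInf_le f i).trans (h i)

lemma abs_ciInf_sub_ciInf_le [Finite ι] [Nonempty ι] {f g : ι → ℝ} {M : ℝ}
    (h : ∀ i, |f i - g i| ≤ M) : |(⨅ i, f i) - ⨅ i, g i| ≤ M := by
  rw [abs_sub_le_iff, sub_le_iff_le_add', sub_le_iff_le_add']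
  refine ⟨ciInf_le_ciInf_add fun i => ?_, ciInf_le_ciInf_add fun i => ?_⟩
  · linarith [(abs_le.1 (h i)).2]
  · linarith [(abs_le.1 (h i)).1]

lemma abs_sum_mul_sub_sum_mul_le_dist [Fintype ι] {p : ι → ℝ} (hp0 : ∀ i, 0 ≤ p i)
    (hp1 : ∑ i, p i = 1) (x y : ι → ℝ) :
    |∑ i, p i * x i - ∑ i, p i * y i| ≤ dist x y :=
  calc |∑ i, p i * x i - ∑ i, p i * y i| = |∑ i, p i * (x i - y i)| := by
        simp only [mul_sub, Finset.sum_sub_distrib]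
    _ ≤ ∑ i, |p i * (x i - y i)| := Finset.abs_sum_le_sum_abs _ _
    _ ≤ ∑ i, p i * dist x y := by
        refine Finset.sum_le_sum fun i _ => ?_
        rw [abs_mul, abs_of_nonneg (hp0 i), ← Real.dist_eq]
        exact mul_le_mul_of_nonneg_left (dist_le_pi_dist x y i) (hp0 i)
    _ = dist x y := by rw [← Finset.sum_mul, hp1, one_mul]

lemma abs_le_iSup_sum_abs {κ : Type*} [Fintype ι] [Finite κ] (M : ι → κ → ℝ) (i : ι) (k : κ) :
    |M i k| ≤ ⨆ k, ∑ i, |M i k| :=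
  (Finset.single_le_sum (fun j _ => abs_nonneg (M j k)) (Finset.mem_univ i)).trans
    (Finite.le_ciSup (fun k => ∑ i, |M i k|) k)

end

lemma dist_bellman_le {S A : ℕ} (hA : 0 < A) {P : Fin S → Fin S → Fin A → ℝ}
    (hP0 : ∀ s' s a, 0 ≤ P s' s a) (hP1 : ∀ s a, ∑ s' : Fin S, P s' s a = 1)
    {γ : ℝ} (hγ : 0 ≤ γ) {C C' : Fin S → Fin A → ℝ} {D : ℝ} (hD : 0 ≤ D)
    (hC : ∀ s a, |C s a - C' s a| ≤ D) (V V' : Fin S → ℝ) :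
    dist (bellman S A P γ C V) (bellman S A P γ C' V') ≤ D + γ * dist V V' := by
  have := Fin.pos_iff_nonempty.1 hA
  refine (dist_pi_le_iff (by positivity)).2 fun s => ?_
  refine (Real.dist_eq _ _).trans_le <| abs_ciInf_sub_ciInf_le fun a => ?_
  have hexp := abs_sum_mul_sub_sum_mul_le_dist (hP0 · s a) (hP1 s a) V V'
  calc |C s a + γ * ∑ s', P s' s a * V s' - (C' s a + γ * ∑ s', P s' s a * V' s')|
      = |(C s a - C' s a) + γ * (∑ s', P s' s a * V s' - ∑ s', P s' s a * V' s')| := by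
        ring_nf
    _ ≤ |C s a - C' s a| + γ * |∑ s', P s' s a * V s' - ∑ s', P s' s a * V' s'| := by
        rw [← abs_of_nonneg hγ, ← abs_mul, abs_of_nonneg hγ]
        exact abs_add_le _ _
    _ ≤ D + γ * dist V V' := by gcongr; exact hC s a

theorem diam_bellman_image_le_general (S A : ℕ) (hS : 0 < S) (hA : 0 < A)
    (P : Fin S → Fin S → Fin A → ℝ)
    (hP0 : ∀ s' s a, 0 ≤ P s' s a)
    (hP1 : ∀ s a, ∑ s' : Fin S, P s' s a = 1)
    (γ : ℝ) (hγ : γ ∈ Set.Ioo (0 : ℝ) 1)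
    (𝒞 : Set (Fin S → Fin A → ℝ))
    (𝒱 : Set (Fin S → ℝ)) (h𝒱b : Bornology.IsBounded 𝒱)
    (D : ℝ) (hD : 0 ≤ D)
    (hCD : ∀ C ∈ 𝒞, ∀ C' ∈ 𝒞, (⨆ a : Fin A, ∑ s : Fin S, |C s a - C' s a|) ≤ D) :
    Metric.diam (⋃ C ∈ 𝒞, ⋃ V ∈ 𝒱, {bellman S A P γ C V}) ≤
      (S : ℝ) * D + γ * Metric.diam 𝒱 := by
  have hγ0 : 0 ≤ γ := hγ.1.le
  refine diam_le_of_forall_dist_le (by positivity) ?_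
  simp only [Set.mem_iUnion, Set.mem_singleton_iff]
  rintro _ ⟨C, hC, V, hV, rfl⟩ _ ⟨C', hC', V', hV', rfl⟩
  have hCC' : ∀ s a, |C s a - C' s a| ≤ D := fun s a =>
    (abs_le_iSup_sum_abs (C - C') s a).trans (hCD C hC C' hC')
  calc dist (bellman S A P γ C V) (bellman S A P γ C' V') ≤ D + γ * dist V V' :=
        dist_bellman_le hA hP0 hP1 hγ0 hD hCC' V V'
    _ ≤ S * D + γ * diam 𝒱 := by
        gcongr
        · exact le_mul_of_one_le_left hD (by exact_mod_cast hS)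
        · exact dist_le_diam_of_mem h𝒱b hV hV'

theorem diam_bellman_image_le (S A : ℕ) (hS : 0 < S) (hA : 0 < A)
    (P : Fin S → Fin S → Fin A → ℝ)
    (hP0 : ∀ s' s a, 0 ≤ P s' s a)
    (hP1 : ∀ s a, ∑ s' : Fin S, P s' s a = 1)
    (γ : ℝ) (hγ : γ ∈ Set.Ioo (0 : ℝ) 1)
    (𝒞 : Set (Fin S → Fin A → ℝ)) (h𝒞ne : 𝒞.Nonempty) (h𝒞b : Bornology.IsBounded 𝒞)
    (𝒱 : Set (Fin S → ℝ)) (h𝒱ne : 𝒱.Nonempty) (h𝒱b : Bornology.IsBounded 𝒱)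
    (D : ℝ) (hD : 0 ≤ D)
    (hCD : ∀ C ∈ 𝒞, ∀ C' ∈ 𝒞, (⨆ a : Fin A, ∑ s : Fin S, |C s a - C' s a|) ≤ D) :
    Metric.diam (⋃ C ∈ 𝒞, ⋃ V ∈ 𝒱, {bellman S A P γ C V}) ≤
      (S : ℝ) * D + γ * Metric.diam 𝒱 :=
  diam_bellman_image_le_general S A hS hA P hP0 hP1 γ hγ 𝒞 𝒱 h𝒱b D hD hCD
end

section
/- (Proposition 7) Let 𝒞 be a nonempty compact set of cost matrices and let 𝒱* be the unique nonempty compact set with F_𝒞(𝒱*) = 𝒱*. Let {C^k}_{k ∈ ℕ} be any sequence with C^k ∈ 𝒞 for every k, let V⁰ ∈ ℝ^S, and define V^{k+1} = f_{C^k}(V^k). Then the distance from V^k to the set 𝒱* tends to zero: inf_{V ∈ 𝒱*} ‖V^k − V‖∞ → 0 as k → ∞. -/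
open Metric

/-- The set-based Bellman operator associated with a set `𝒞` of cost matrices. -/
noncomputable def setBellman (S A : ℕ) (P : Fin S → Fin S → Fin A → ℝ) (γ : ℝ)
    (𝒞 : Set (Fin S → Fin A → ℝ)) (𝒱 : Set (Fin S → ℝ)) : Set (Fin S → ℝ) :=
  closure (⋃ C ∈ 𝒞, ⋃ V ∈ 𝒱, {bellman S A P γ C V})

/-!
Every `f_C` with `C ∈ 𝒞` maps `𝒱*` into `F_𝒞(𝒱*) = 𝒱*`, and it is a `γ`-contraction for the
sup norm. Hence for every `W ∈ 𝒱*` the point `f_{C^k} W ∈ 𝒱*` lies within `γ ‖V^k - W‖∞` of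
`V^{k+1}`, so the distance to `𝒱*` is multiplied by at most `γ` at each step and decays
geometrically.
-/

open Filter Topology Set
open scoped NNReal

lemma tendsto_zero_of_le_mul_of_lt_one {u : ℕ → ℝ} {c : ℝ} (hu : ∀ n, 0 ≤ u n) (hc0 : 0 ≤ c)
    (hc1 : c < 1) (h : ∀ n, u (n + 1) ≤ c * u n) : Tendsto u atTop (𝓝 0) := by
  have hgeom : ∀ n, u n ≤ c ^ n * u 0 := by
    intro n
    induction n with
    | zero => simp
    | succ n ih =>
      calc u (n + 1) ≤ c * u n := h n
        _ ≤ c * (c ^ n * u 0) := by gcongr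
        _ = c ^ (n + 1) * u 0 := by ring
  have hlim : Tendsto (fun n => c ^ n * u 0) atTop (𝓝 0) := by
    simpa using (tendsto_pow_atTop_nhds_zero_of_lt_one hc0 hc1).mul_const (u 0)
  exact squeeze_zero hu hgeom hlim

lemma infDist_le_mul_infDist_of_mapsTo {α : Type*} [PseudoMetricSpace α] {f : α → α} {K : ℝ≥0}
    {s : Set α} (hf : LipschitzWith K f) (hs : MapsTo f s s) (x : α) :
    infDist (f x) s ≤ K * infDist x s := by
  rcases s.eq_empty_or_nonempty with rfl | hne
  · simp
  have : Nonempty s := hne.to_subtype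
  rw [infDist_eq_iInf (x := x), Real.mul_iInf_of_nonneg K.coe_nonneg]
  exact le_ciInf fun y => (infDist_le_dist_of_mem (hs y.2)).trans (hf.dist_le_mul x y)

lemma dist_iInf_iInf_le {ι : Type*} [Fintype ι] (f g : ι → ℝ) :
    dist (⨅ i, f i) (⨅ i, g i) ≤ dist f g := by
  cases isEmpty_or_nonempty ι
  · simp [Real.iInf_of_isEmpty]
  have iInf_sub_dist_le : ∀ f g : ι → ℝ, (⨅ i, f i) - dist f g ≤ ⨅ i, g i := fun f g =>
    le_ciInf fun i => by
      have hfi : (⨅ i, f i) ≤ f i := ciInf_le (Finite.bddBelow_range f) i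
      have hfg : f i - g i ≤ dist f g := (le_abs_self _).trans (dist_le_pi_dist f g i)
      linarith
  rw [Real.dist_eq, abs_sub_le_iff]
  constructor
  · linarith [iInf_sub_dist_le f g]
  · linarith [iInf_sub_dist_le g f, dist_comm f g]

lemma dist_sum_mul_le_dist {ι : Type*} [Fintype ι] {p : ι → ℝ} (hp0 : ∀ i, 0 ≤ p i)
    (hp1 : ∑ i, p i = 1) (x y : ι → ℝ) :
    dist (∑ i, p i * x i) (∑ i, p i * y i) ≤ dist x y := by
  rw [Real.dist_eq, ← Finset.sum_sub_distrib]
  calc |∑ i, (p i * x i - p i * y i)| ≤ ∑ i, |p i * x i - p i * y i| :=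
        Finset.abs_sum_le_sum_abs _ _
    _ ≤ ∑ i, p i * dist x y := by
        gcongr with i
        rw [← mul_sub, abs_mul, abs_of_nonneg (hp0 i)]
        exact mul_le_mul_of_nonneg_left (dist_le_pi_dist x y i) (hp0 i)
    _ = dist x y := by rw [← Finset.sum_mul, hp1, one_mul]

section Bellman

variable {S A : ℕ} {P : Fin S → Fin S → Fin A → ℝ} {γ : ℝ}

lemma lipschitzWith_bellman (hP0 : ∀ s' s a, 0 ≤ P s' s a) (hP1 : ∀ s a, ∑ s', P s' s a = 1)
    (hγ : 0 ≤ γ) (C : Fin S → Fin A → ℝ) :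
    LipschitzWith γ.toNNReal (bellman S A P γ C) := by
  refine LipschitzWith.of_dist_le_mul fun V₁ V₂ => ?_
  rw [Real.coe_toNNReal γ hγ, dist_pi_le_iff (by positivity)]
  intro s
  refine (dist_iInf_iInf_le _ _).trans ((dist_pi_le_iff (by positivity)).2 fun a => ?_)
  rw [dist_add_left, ← smul_eq_mul, ← smul_eq_mul, dist_smul₀, Real.norm_of_nonneg hγ]
  gcongr
  exact dist_sum_mul_le_dist (hP0 · s a) (hP1 s a) V₁ V₂

lemma mapsTo_bellman_of_setBellman_subset {𝒞 : Set (Fin S → Fin A → ℝ)} {𝒱 : Set (Fin S → ℝ)}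
    {C : Fin S → Fin A → ℝ} (hC : C ∈ 𝒞) (h𝒱 : setBellman S A P γ 𝒞 𝒱 ⊆ 𝒱) :
    MapsTo (bellman S A P γ C) 𝒱 𝒱 := fun _ hV =>
  h𝒱 (subset_closure (mem_biUnion hC (mem_biUnion hV rfl)))

end Bellman

theorem value_iteration_tendsto_fixed_point_set_general (S A : ℕ)
    (P : Fin S → Fin S → Fin A → ℝ)
    (hP0 : ∀ s' s a, 0 ≤ P s' s a)
    (hP1 : ∀ s a, ∑ s' : Fin S, P s' s a = 1)
    (γ : ℝ) (hγ : γ ∈ Set.Ioo (0 : ℝ) 1)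
    (𝒞 : Set (Fin S → Fin A → ℝ))
    (Vstar : Set (Fin S → ℝ))
    (hVfix : setBellman S A P γ 𝒞 Vstar = Vstar)
    (Cseq : ℕ → (Fin S → Fin A → ℝ)) (hCseq : ∀ k, Cseq k ∈ 𝒞)
    (V : ℕ → (Fin S → ℝ))
    (hV : ∀ k, V (k + 1) = bellman S A P γ (Cseq k) (V k)) :
    Filter.Tendsto (fun k => Metric.infDist (V k) Vstar) Filter.atTop (nhds 0) := by
  obtain ⟨hγ0, hγ1⟩ := hγ
  refine tendsto_zero_of_le_mul_of_lt_one (fun _ => infDist_nonneg) hγ0.le hγ1 fun k => ?_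
  have hstep := infDist_le_mul_infDist_of_mapsTo (lipschitzWith_bellman hP0 hP1 hγ0.le (Cseq k))
    (mapsTo_bellman_of_setBellman_subset (hCseq k) hVfix.subset) (V k)
  rwa [Real.coe_toNNReal γ hγ0.le, ← hV k] at hstep

theorem value_iteration_tendsto_fixed_point_set (S A : ℕ) (hS : 0 < S) (hA : 0 < A)
    (P : Fin S → Fin S → Fin A → ℝ)
    (hP0 : ∀ s' s a, 0 ≤ P s' s a)
    (hP1 : ∀ s a, ∑ s' : Fin S, P s' s a = 1)
    (γ : ℝ) (hγ : γ ∈ Set.Ioo (0 : ℝ) 1)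
    (𝒞 : Set (Fin S → Fin A → ℝ)) (h𝒞ne : 𝒞.Nonempty) (h𝒞c : IsCompact 𝒞)
    (Vstar : Set (Fin S → ℝ)) (hVne : Vstar.Nonempty) (hVc : IsCompact Vstar)
    (hVfix : setBellman S A P γ 𝒞 Vstar = Vstar)
    (Cseq : ℕ → (Fin S → Fin A → ℝ)) (hCseq : ∀ k, Cseq k ∈ 𝒞)
    (V : ℕ → (Fin S → ℝ))
    (hV : ∀ k, V (k + 1) = bellman S A P γ (Cseq k) (V k)) :
    Filter.Tendsto (fun k => Metric.infDist (V k) Vstar) Filter.atTop (nhds 0) :=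
  value_iteration_tendsto_fixed_point_set_general S A P hP0 hP1 γ hγ 𝒞 Vstar hVfix Cseq hCseq V hV
end
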